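/- Let (Λ, {e_i}_{i∈I}) be a Hom-finite K-algebra with enough idempotents. Then for each idempotent e in the family, the endomorphism ring of the right Λ-module eΛ is an Artinian ring, and e is a local object of R(Λ) (i.e. End(eΛ) is local) if and only if e is a primitive idempotent. -/

import Mathlib

noncomputable section

variable (K : Type) [CommRing K]
variable (Λ : Type) [NonUnitalRing Λ] [Module K Λ] [SMulCommClass K Λ Λ] [IsScalarTower K Λ Λ]

/-- `eΛ` (for an idempotent-to-be `e`): the additive subgroup `{x | e * x = x}`. -/
def leftPart (a : Λ) : AddSubgroup Λ where
  carrier := {x | a * x = x}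
  add_mem' := by intro x y hx hy; simp only [Set.mem_setOf_eq] at *; rw [mul_add, hx, hy]
  zero_mem' := by simp
  neg_mem' := by intro x hx; simp only [Set.mem_setOf_eq] at *; rw [mul_neg, hx]

/-- `Λe`: the additive subgroup `{x | x * e = x}`. -/
def rightPart (a : Λ) : AddSubgroup Λ where
  carrier := {x | x * a = x}
  add_mem' := by intro x y hx hy; simp only [Set.mem_setOf_eq] at *; rw [add_mul, hx, hy]
  zero_mem' := by simp
  neg_mem' := by intro x hx; simp only [Set.mem_setOf_eq] at *; rw [neg_mul, hx]

/-- The corner `eΛf = {y | f * y = y ∧ y * e = y}` (morphisms `e → f`), as a `K`-submodule. -/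
def homSubmodule (e f : Λ) : Submodule K Λ where
  carrier := {y | f * y = y ∧ y * e = y}
  add_mem' := by
    rintro a b ⟨ha1, ha2⟩ ⟨hb1, hb2⟩
    exact ⟨by rw [mul_add, ha1, hb1], by rw [add_mul, ha2, hb2]⟩
  zero_mem' := by simp
  smul_mem' := by
    rintro k a ⟨ha1, ha2⟩
    exact ⟨by rw [mul_smul_comm, ha1], by rw [smul_mul_assoc, ha2]⟩

/-- The corner subgroup `{y | e * y = y ∧ y * e = y}` of an idempotent `e`. -/
def cornerSubgroup (e : {x : Λ // x * x = x}) : AddSubgroup Λ where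
  carrier := {y | e.1 * y = y ∧ y * e.1 = y}
  add_mem' := by
    rintro a b ⟨ha1, ha2⟩ ⟨hb1, hb2⟩
    exact ⟨by rw [mul_add, ha1, hb1], by rw [add_mul, ha2, hb2]⟩
  zero_mem' := by simp
  neg_mem' := by
    rintro a ⟨ha1, ha2⟩
    exact ⟨by rw [mul_neg, ha1], by rw [neg_mul, ha2]⟩

/-- The corner ring `eΛe` of an idempotent `e`. -/
def Corner (e : {x : Λ // x * x = x}) : Type := ↥(cornerSubgroup Λ e)

instance (e : {x : Λ // x * x = x}) : AddCommGroup (Corner Λ e) :=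
  inferInstanceAs (AddCommGroup ↥(cornerSubgroup Λ e))

instance (e : {x : Λ // x * x = x}) : Ring (Corner Λ e) :=
  { (inferInstance : AddCommGroup (Corner Λ e)) with
    mul := fun a b => ⟨a.1 * b.1,
      ⟨by rw [← mul_assoc, a.2.1], by rw [mul_assoc, b.2.2]⟩⟩
    one := ⟨e.1, ⟨e.2, e.2⟩⟩
    mul_assoc := fun a b c => Subtype.ext (mul_assoc a.1 b.1 c.1)
    one_mul := fun a => Subtype.ext a.2.1
    mul_one := fun a => Subtype.ext a.2.2
    left_distrib := fun a b c => Subtype.ext (mul_add a.1 b.1 c.1)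
    right_distrib := fun a b c => Subtype.ext (add_mul a.1 b.1 c.1)
    zero_mul := fun a => Subtype.ext (zero_mul a.1)
    mul_zero := fun a => Subtype.ext (mul_zero a.1) }

/-- `e` is a primitive idempotent: it is nonzero and cannot be written as a sum of two nonzero
orthogonal idempotents of `eΛe`. -/
def IsPrimitiveIdem (e : Λ) : Prop :=
  e ≠ 0 ∧ ¬ ∃ f g : Λ, f ≠ 0 ∧ g ≠ 0 ∧ f * f = f ∧ g * g = g ∧ f * g = 0 ∧ g * f = 0 ∧
    f + g = e ∧ e * f = f ∧ f * e = f ∧ e * g = g ∧ g * e = g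

/-! For a ring `R` without idempotents other than `0` and `1`, any decomposition `R = p ⊕ q`
into left ideals is trivial, since the projection onto `p` is right multiplication by the
idempotent `proj_p 1`. If `R` is moreover left Artinian, hence left Noetherian by
Hopkins–Levitzki, Fitting's lemma for `x ↦ x * a` gives such a decomposition
`R = ker (· * aⁿ) ⊕ range (· * aⁿ)`, so `a` is a unit or nilpotent, and `R` is local.
The corner `eΛe` is left Artinian because it has finite length over `K` and its left ideals
are `K`-submodules; its idempotents other than `0` and `1` are exactly the splittings
`e = f + g` excluded by primitivity. -/

theorem Ideal.eq_bot_or_eq_bot_of_isCompl {R : Type*} [Ring R]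
    (h : ∀ x : R, IsIdempotentElem x → x = 0 ∨ x = 1) {p q : Ideal R}
    (hpq : IsCompl p q) : p = ⊥ ∨ q = ⊥ := by
  set u := p.projection q hpq 1
  have hπ (x : R) : p.projection q hpq x = x * u := by
    simpa using (p.projection q hpq).map_smul x 1
  have hu : IsIdempotentElem u := by
    rw [IsIdempotentElem, ← hπ,
      Submodule.projection_apply_of_mem_left hpq (Submodule.projection_apply_mem hpq 1)]
  refine (h u hu).imp (fun hu0 => ?_) (fun hu1 => ?_) <;> refine eq_bot_iff.mpr fun x hx => ?_
  · rw [Submodule.mem_bot, ← Submodule.projection_apply_of_mem_left hpq hx, hπ, hu0, mul_zero]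
  · rw [Submodule.mem_bot, ← mul_one x, ← hu1, ← hπ,
      Submodule.projection_apply_of_mem_right hpq hx]

theorem IsLocalRing.of_isArtinianRing_of_forall_isIdempotentElem {R : Type*} [Ring R]
    [Nontrivial R] [IsArtinianRing R]
    (h : ∀ x : R, IsIdempotentElem x → x = 0 ∨ x = 1) : IsLocalRing R := by
  refine of_isUnit_or_isUnit_one_sub_self fun a => ?_
  let f := LinearMap.toSpanSingleton R R a
  obtain ⟨n, hfitting, hn⟩ :=
    (f.eventually_isCompl_ker_pow_range_pow.and (Filter.eventually_ge_atTop 1)).exists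
  have hfn : ⇑(f ^ n) = (· * a ^ n) := by
    clear hfitting hn
    induction n with
    | zero => ext; simp
    | succ n ih => ext x; rw [pow_succ, Module.End.mul_apply, ih]; simp [f, pow_succ', mul_assoc]
  rcases Ideal.eq_bot_or_eq_bot_of_isCompl h hfitting with hker | hrange
  · left
    have hreg : IsRightRegular (a ^ n) := by
      simpa only [IsRightRegular, hfn] using LinearMap.ker_eq_bot.mp hker
    exact (isUnit_pow_iff (by omega)).mp (IsArtinianRing.isUnit_iff_isRightRegular.mpr hreg)
  · right
    refine IsNilpotent.isUnit_one_sub ⟨n, ?_⟩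
    simpa [hfn] using LinearMap.congr_fun (LinearMap.range_eq_bot.mp hrange) 1

theorem IsLocalRing.eq_zero_or_eq_one_of_isIdempotentElem {R : Type*} [Ring R] [IsLocalRing R]
    {x : R} (hx : IsIdempotentElem x) : x = 0 ∨ x = 1 := by
  rcases isUnit_or_isUnit_of_add_one (add_sub_cancel x 1) with hu | hu
  · exact Or.inr ((IsIdempotentElem.iff_eq_one_of_isUnit hu).mp hx)
  · exact Or.inl (sub_eq_self.mp ((IsIdempotentElem.iff_eq_one_of_isUnit hu).mp hx.one_sub))

theorem isLocalRing_iff_forall_isIdempotentElem {R : Type*} [Ring R] [IsArtinianRing R] :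
    IsLocalRing R ↔ Nontrivial R ∧ ∀ x : R, IsIdempotentElem x → x = 0 ∨ x = 1 :=
  ⟨fun _ => ⟨inferInstance, fun _ => IsLocalRing.eq_zero_or_eq_one_of_isIdempotentElem⟩,
    fun ⟨_, h⟩ => IsLocalRing.of_isArtinianRing_of_forall_isIdempotentElem h⟩

instance (e : {x : Λ // x * x = x}) : Module K (Corner Λ e) :=
  inferInstanceAs (Module K ↥(homSubmodule K Λ e.1 e.1))

instance (e : {x : Λ // x * x = x}) : IsScalarTower K (Corner Λ e) (Corner Λ e) :=
  ⟨fun k a b => Subtype.ext (smul_mul_assoc k a.1 b.1)⟩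

theorem isArtinianRing_corner (e : {x : Λ // x * x = x})
    (h : IsArtinian K ↥(homSubmodule K Λ e.1 e.1)) : IsArtinianRing (Corner Λ e) :=
  isArtinian_of_tower K (M := Corner Λ e) h

theorem corner_nontrivial_iff (a : Λ) (ha : a * a = a) :
    Nontrivial (Corner Λ ⟨a, ha⟩) ↔ a ≠ 0 := by
  refine ⟨fun _ ha0 => one_ne_zero (α := Corner Λ ⟨a, ha⟩) (Subtype.ext ha0), fun ha0 => ?_⟩
  exact ⟨1, 0, fun h => ha0 congr(Subtype.val $h)⟩

theorem exists_orthogonal_decomposition_iff (a : Λ) (ha : a * a = a) :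
    (∃ f g : Λ, f ≠ 0 ∧ g ≠ 0 ∧ f * f = f ∧ g * g = g ∧ f * g = 0 ∧ g * f = 0 ∧
      f + g = a ∧ a * f = f ∧ f * a = f ∧ a * g = g ∧ g * a = g) ↔
      ∃ x : Corner Λ ⟨a, ha⟩, IsIdempotentElem x ∧ x ≠ 0 ∧ x ≠ 1 := by
  constructor
  · rintro ⟨f, g, hf0, hg0, hff, -, -, -, hsum, haf, hfa, -, -⟩
    refine ⟨⟨f, haf, hfa⟩, Subtype.ext hff, fun h => hf0 congr(Subtype.val $h), fun h => hg0 ?_⟩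
    have hfa' : f = a := congr(Subtype.val $h)
    rwa [hfa', add_eq_left] at hsum
  · rintro ⟨x, hx, hx0, hx1⟩
    refine ⟨x.1, (1 - x).1, fun h => hx0 (Subtype.ext h),
      fun h => hx1 (sub_eq_zero.mp (Subtype.ext h)).symm, congr(Subtype.val $hx),
      congr(Subtype.val $hx.one_sub), congr(Subtype.val $hx.mul_one_sub_self),
      congr(Subtype.val $hx.one_sub_mul_self), congr(Subtype.val $(add_sub_cancel x 1)),
      congr(Subtype.val $(one_mul x)), congr(Subtype.val $(mul_one x)),
      congr(Subtype.val $(one_mul (1 - x))), congr(Subtype.val $(mul_one (1 - x)))⟩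

theorem isPrimitiveIdem_iff (a : Λ) (ha : a * a = a) :
    IsPrimitiveIdem Λ a ↔ Nontrivial (Corner Λ ⟨a, ha⟩) ∧
      ∀ x : Corner Λ ⟨a, ha⟩, IsIdempotentElem x → x = 0 ∨ x = 1 := by
  rw [IsPrimitiveIdem, exists_orthogonal_decomposition_iff Λ a ha, corner_nontrivial_iff]
  simp only [not_exists, not_and, not_not, or_iff_not_imp_left]

theorem corner_artinian_and_local_iff_primitive
    (I : Type) (e : I → Λ)
    (hidem : ∀ i, e i * e i = e i)
    (hfin : ∀ i j, IsFiniteLength K ↥(homSubmodule K Λ (e i) (e j)))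
    (i : I) :
    IsArtinianRing (Corner Λ ⟨e i, hidem i⟩) ∧
      (IsLocalRing (Corner Λ ⟨e i, hidem i⟩) ↔ IsPrimitiveIdem Λ (e i)) := by
  have hartinian : IsArtinianRing (Corner Λ ⟨e i, hidem i⟩) :=
    isArtinianRing_corner K Λ _ (isFiniteLength_iff_isNoetherian_isArtinian.mp (hfin i i)).2
  refine ⟨hartinian, ?_⟩
  rw [isLocalRing_iff_forall_isIdempotentElem, isPrimitiveIdem_iff]

end
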